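/- Let L be an infinite locally compact Hausdorff topological space without isolated points, let 𝒜 be a somewhat regular linear subspace of C₀(L), let g ∈ 𝒜 with ‖g‖ = 1, let μ be a continuous linear functional on C₀(L) with ‖μ‖ = 1 whose restriction to 𝒜 also has norm 1, and let α, ε > 0. Then there exists ψ ∈ 𝒜 with ‖ψ‖ = 1 such that μ(ψ) > 1 − α and ‖g + ψ‖ > 2 − ε. -/

import Mathlib

open scoped ZeroAtInfty

/-- A linear subspace `𝒜` of `C₀(L, ℝ)` is *somewhat regular* if for every non-empty open
subset `V` of `L` and every `ε` with `0 < ε < 1` there is `f ∈ 𝒜` with `‖f‖ = 1` and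
`|f x| ≤ ε` for every `x ∈ L \ V`. -/
def SomewhatRegular {L : Type*} [TopologicalSpace L]
    (𝒜 : Submodule ℝ C₀(L, ℝ)) : Prop :=
  ∀ V : Set L, IsOpen V → V.Nonempty → ∀ ε : ℝ, 0 < ε → ε < 1 →
    ∃ f ∈ 𝒜, ‖f‖ = 1 ∧ ∀ x ∉ V, |f x| ≤ ε

/-! Let `f ∈ 𝒜`, `‖f‖ ≤ 1`, almost norm `μ`, and let `s = ±1` with `s g (x₀) ≈ 1`. Since `L` has
no isolated points, the open set `{s g > 1 - δ}` contains `n ≈ 1 / δ` disjoint open sets on which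
`f` is almost constant, `f ≈ f (pᵢ)`. Averaging nested peaks, which somewhat regularity provides,
gives on each an almost nonnegative peak `uᵢ ∈ 𝒜`. Since the `uᵢ` have disjoint supports,
`∑ |μ uᵢ| ≤ 1 + n δ`, so `μ uᵢ ≈ 0` for some `i`. Then `f + (s - f (pᵢ)) uᵢ` interpolates between
`f` and `s` as `uᵢ` runs from `0` to `1`: it has norm `≈ 1`, `μ`-value `≈ μ f ≈ 1`, and it is
`≈ s` at the top of `uᵢ`, where `g ≈ s` as well. Normalizing it gives `ψ`. -/

open Topology Function

theorem abs_add_sub_mul_le {F a s t δ : ℝ} (hF : |F - a| ≤ δ) (ha : |a| ≤ 1) (hs : |s| = 1)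
    (ht₀ : -δ ≤ t) (ht₁ : t ≤ 1) : |F + (s - a) * t| ≤ 1 + 3 * δ := by
  have ht : 0 ≤ 1 - t := sub_nonneg.2 ht₁
  have hconv : |(1 - t) * a + t * s| ≤ (1 - t) + |t| := by
    grw [abs_add_le, abs_mul, abs_mul, abs_of_nonneg ht, ha, hs, mul_one, mul_one]
  calc |F + (s - a) * t| = |(F - a) + ((1 - t) * a + t * s)| := by ring_nf
    _ ≤ |F - a| + ((1 - t) + |t|) := (abs_add_le _ _).trans (by grw [hconv])
    _ ≤ 1 + 3 * δ := by cases abs_cases t <;> linarith [abs_nonneg (F - a)]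

theorem one_sub_three_mul_le_mul_add_sub_mul {F a s t δ : ℝ} (hF : |F - a| ≤ δ) (ha : |a| ≤ 1)
    (hs : |s| = 1) (ht : 1 - δ ≤ t) : 1 - 3 * δ ≤ s * (F + (s - a) * t) := by
  have hss : s * s = 1 := by rw [← abs_mul_abs_self, hs, one_mul]
  have hsa : |s * a| ≤ 1 := by rwa [abs_mul, hs, one_mul]
  have hsF : |s * (F - a)| ≤ δ := by rwa [abs_mul, hs, one_mul]
  have hδ : 0 ≤ δ := (abs_nonneg _).trans hF
  have key : s * (F + (s - a) * t) = s * (F - a) + s * a + (1 - s * a) * t := by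
    linear_combination t * hss
  rw [key]
  nlinarith [abs_le.1 hsa, abs_le.1 hsF]

theorem ContinuousLinearMap.exists_norm_lt_one_lt_apply {E : Type*} [NormedAddCommGroup E]
    [NormedSpace ℝ E] (T : E →L[ℝ] ℝ) {r : ℝ} (hr : r < ‖T‖) :
    ∃ a, ‖a‖ < 1 ∧ r < T a := by
  obtain ⟨a, ha, hTa⟩ := T.exists_lt_apply_of_lt_opNorm hr
  rcases lt_abs.1 (Real.norm_eq_abs (T a) ▸ hTa) with h | h
  · exact ⟨a, ha, h⟩
  · exact ⟨-a, by rwa [norm_neg], by rwa [map_neg]⟩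

theorem norm_inv_norm_smul_sub_self {E : Type*} [SeminormedAddCommGroup E] [NormedSpace ℝ E]
    {v : E} (hv : ‖v‖ ≠ 0) : ‖‖v‖⁻¹ • v - v‖ = |1 - ‖v‖| := by
  calc ‖‖v‖⁻¹ • v - v‖ = |‖v‖⁻¹ - 1| * ‖v‖ := by
        rw [← Real.norm_eq_abs, ← norm_smul, sub_smul, one_smul]
    _ = |(‖v‖⁻¹ - 1) * ‖v‖| := by rw [abs_mul, abs_norm]
    _ = |1 - ‖v‖| := by rw [sub_mul, inv_mul_cancel₀ hv, one_mul]

theorem IsOpen.exists_fin_pairwise_disjoint {L : Type*} [TopologicalSpace L] [T2Space L]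
    (hL : ∀ x : L, ¬ IsOpen ({x} : Set L)) {W : Set L} (hW : IsOpen W) (hWne : W.Nonempty)
    (n : ℕ) : ∃ (p : Fin n → L) (U : Fin n → Set L), Pairwise (Disjoint on U) ∧
      ∀ i, IsOpen (U i) ∧ p i ∈ U i ∧ U i ⊆ W := by
  obtain ⟨x, hx⟩ := hWne
  have : (𝓝[≠] x).NeBot := ⟨fun h => hL x ((isOpen_singleton_iff_punctured_nhds x).2 h)⟩
  have hWinf : W.Infinite := infinite_of_mem_nhds x (hW.mem_nhds hx)
  set q := hWinf.natEmbedding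
  let p : Fin n → L := fun i => q i
  have hp : Injective p := fun i j h => Fin.ext (q.injective (Subtype.ext h))
  obtain ⟨U, hU, hUdisj⟩ := (Set.finite_range p).t2_separation
  refine ⟨p, fun i => W ∩ U (p i), fun i j hij => ?_, fun i =>
    ⟨hW.inter (hU _).2, ⟨(q i).2, (hU _).1⟩, Set.inter_subset_left⟩⟩
  exact (hUdisj (Set.mem_range_self i) (Set.mem_range_self j) (hp.ne hij)).mono
    Set.inter_subset_right Set.inter_subset_right

namespace ZeroAtInftyContinuousMap

variable {α β : Type*} [TopologicalSpace α]

theorem sum_apply [AddCommMonoid β] [TopologicalSpace β] [ContinuousAdd β] {ι : Type*}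
    (s : Finset ι) (f : ι → C₀(α, β)) (x : α) : (∑ i ∈ s, f i) x = ∑ i ∈ s, f i x :=
  map_sum (⟨⟨fun f => f x, rfl⟩, fun _ _ => rfl⟩ : C₀(α, β) →+ β) f s

variable [SeminormedAddCommGroup β]

theorem norm_coe_le_norm (f : C₀(α, β)) (x : α) : ‖f x‖ ≤ ‖f‖ :=
  norm_toBCF_eq_norm (f := f) ▸ f.toBCF.norm_coe_le_norm x

theorem abs_apply_le_norm (f : C₀(α, ℝ)) (x : α) : |f x| ≤ ‖f‖ :=
  Real.norm_eq_abs (f x) ▸ f.norm_coe_le_norm x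

theorem mul_apply_le_norm (f : C₀(α, ℝ)) {s : ℝ} (hs : |s| = 1) (x : α) : s * f x ≤ ‖f‖ :=
  calc s * f x ≤ |s * f x| := le_abs_self _
    _ = |f x| := by rw [abs_mul, hs, one_mul]
    _ ≤ ‖f‖ := f.abs_apply_le_norm x

theorem norm_le {f : C₀(α, β)} {C : ℝ} (hC : 0 ≤ C) : ‖f‖ ≤ C ↔ ∀ x, ‖f x‖ ≤ C :=
  norm_toBCF_eq_norm (f := f) ▸ f.toBCF.norm_le hC

theorem exists_lt_norm_apply {f : C₀(α, β)} {r : ℝ} (hr₀ : 0 ≤ r) (hr : r < ‖f‖) :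
    ∃ x, r < ‖f x‖ := by
  contrapose! hr
  exact (norm_le hr₀).2 hr

theorem norm_add_sub_smul_le {f u : C₀(α, ℝ)} {V : Set α} {a s δ : ℝ} (hf : ‖f‖ ≤ 1)
    (hu : ‖u‖ ≤ 1) (ha : |a| ≤ 1) (hs : |s| = 1) (hδ : 0 ≤ δ)
    (hfV : ∀ x ∈ V, |f x - a| ≤ δ) (huV : ∀ x ∉ V, |u x| ≤ δ) (hu_lower : ∀ x, -δ ≤ u x) :
    ‖f + (s - a) • u‖ ≤ 1 + 3 * δ := by
  refine (norm_le (by positivity)).2 fun x => ?_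
  have hux := (abs_apply_le_norm u x).trans hu
  rw [Real.norm_eq_abs, add_apply, coe_smul, Pi.smul_apply, smul_eq_mul]
  by_cases hx : x ∈ V
  · exact abs_add_sub_mul_le (hfV x hx) ha hs (hu_lower x) (abs_le.1 hux).2
  · have hsa : |s - a| ≤ 2 := by linarith [abs_sub s a]
    calc |f x + (s - a) * u x| ≤ 1 + 2 * δ := by
          grw [abs_add_le, abs_mul, abs_apply_le_norm f x, hf, hsa, huV x hx]
      _ ≤ 1 + 3 * δ := by linarith

theorem norm_sum_smul_le_of_pairwise_disjoint {ι : Type*} [Fintype ι] {u : ι → C₀(α, ℝ)}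
    {V : ι → Set α} {δ : ℝ} (hV : Pairwise (Disjoint on V)) (hu : ∀ i, ‖u i‖ ≤ 1)
    (huV : ∀ i, ∀ x ∉ V i, |u i x| ≤ δ) (hδ : 0 ≤ δ) {c : ι → ℝ} (hc : ∀ i, |c i| ≤ 1) :
    ‖∑ i, c i • u i‖ ≤ 1 + Fintype.card ι * δ := by
  classical
  refine (norm_le (by positivity)).2 fun x => ?_
  have hcard : (Finset.univ.filter fun i => x ∈ V i).card ≤ 1 :=
    Finset.card_le_one.2 fun i hi j hj => by
      by_contra hij
      exact Set.disjoint_left.1 (hV hij) (Finset.mem_filter.1 hi).2 (Finset.mem_filter.1 hj).2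
  have hterm : ∀ i, |c i * u i x| ≤ δ + if x ∈ V i then 1 else 0 := fun i => by
    rw [abs_mul]
    refine (mul_le_of_le_one_left (abs_nonneg _) (hc i)).trans ?_
    split_ifs with hx
    · linarith [(u i).abs_apply_le_norm x, hu i]
    · simpa using huV i x hx
  calc ‖(∑ i, c i • u i) x‖ = |∑ i, c i * u i x| := by simp [sum_apply]
    _ ≤ ∑ i, (δ + if x ∈ V i then 1 else 0) :=
        (Finset.abs_sum_le_sum_abs _ _).trans (Finset.sum_le_sum fun i _ => hterm i)
    _ ≤ 1 + Fintype.card ι * δ := by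
        rw [Finset.sum_add_distrib, Finset.sum_boole]
        simp only [Finset.sum_const, Finset.card_univ, nsmul_eq_mul]
        have : ((Finset.univ.filter fun i => x ∈ V i).card : ℝ) ≤ 1 := by exact_mod_cast hcard
        linarith

theorem exists_abs_apply_le_of_pairwise_disjoint {ι : Type*} [Fintype ι] [Nonempty ι]
    (μ : C₀(α, ℝ) →L[ℝ] ℝ) (hμ : ‖μ‖ ≤ 1) {u : ι → C₀(α, ℝ)} {V : ι → Set α} {δ : ℝ}
    (hV : Pairwise (Disjoint on V)) (hu : ∀ i, ‖u i‖ ≤ 1) (huV : ∀ i, ∀ x ∉ V i, |u i x| ≤ δ)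
    (hδ : 0 ≤ δ) : ∃ i, |μ (u i)| ≤ (Fintype.card ι : ℝ)⁻¹ + δ := by
  have hsign : ∀ i, |((SignType.sign (μ (u i)) : SignType) : ℝ)| ≤ 1 := fun i => by
    rcases lt_trichotomy (μ (u i)) 0 with h | h | h <;> simp [h, sign_neg, sign_pos]
  have hsum : ∑ i, |μ (u i)| ≤ ∑ _i : ι, ((Fintype.card ι : ℝ)⁻¹ + δ) := by
    have hn : (Fintype.card ι : ℝ) ≠ 0 := by positivity
    calc ∑ i, |μ (u i)| = μ (∑ i, (SignType.sign (μ (u i)) : ℝ) • u i) := by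
          simp [map_sum, sign_mul_self]
      _ ≤ ‖μ‖ * ‖∑ i, (SignType.sign (μ (u i)) : ℝ) • u i‖ := (le_abs_self _).trans (μ.le_opNorm _)
      _ ≤ 1 * (1 + Fintype.card ι * δ) := by
          gcongr
          exact norm_sum_smul_le_of_pairwise_disjoint hV hu huV hδ hsign
      _ = ∑ _i : ι, ((Fintype.card ι : ℝ)⁻¹ + δ) := by
          simp only [Finset.sum_const, Finset.card_univ, nsmul_eq_mul]
          field_simp
  obtain ⟨i, -, hi⟩ := Finset.exists_le_of_sum_le Finset.univ_nonempty hsum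
  exact ⟨i, hi⟩

end ZeroAtInftyContinuousMap

namespace SomewhatRegular

variable {L : Type*} [TopologicalSpace L] {𝒜 : Submodule ℝ C₀(L, ℝ)}

theorem exists_peak (h𝒜 : SomewhatRegular 𝒜) {V : Set L} (hV : IsOpen V) (hVne : V.Nonempty)
    {δ : ℝ} (hδ₀ : 0 < δ) (hδ : δ < 1 / 2) :
    ∃ h ∈ 𝒜, ‖h‖ ≤ 1 ∧ (∀ x ∉ V, |h x| ≤ δ) ∧ ∃ y ∈ V, 1 - δ < h y := by
  obtain ⟨f, hf𝒜, hf, hfV⟩ := h𝒜 V hV hVne δ hδ₀ (by linarith)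
  obtain ⟨y, hy⟩ := f.exists_lt_norm_apply (r := 1 - δ) (by linarith) (by linarith)
  rw [Real.norm_eq_abs] at hy
  have hyV : y ∈ V := by
    by_contra hyV
    linarith [hfV y hyV]
  rcases lt_abs.1 hy with hy | hy
  · exact ⟨f, hf𝒜, hf.le, hfV, y, hyV, hy⟩
  · refine ⟨-f, neg_mem hf𝒜, by rw [norm_neg, hf], fun x hx => ?_, y, hyV, hy⟩
    simpa using hfV x hx

/-- The peaks are nested: the `k + 1`-st is `≥ -δ` outside the set where the first `k` sum to
at least `k (1 - δ) ≥ 0`, so at each point at most one summand is below `-δ`. -/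
theorem exists_sum_nested_peaks (h𝒜 : SomewhatRegular 𝒜) {V : Set L} (hV : IsOpen V)
    (hVne : V.Nonempty) {δ : ℝ} (hδ₀ : 0 < δ) (hδ : δ < 1 / 2) (k : ℕ) :
    ∃ u ∈ 𝒜, ‖u‖ ≤ k ∧ (∀ x ∉ V, |u x| ≤ k * δ) ∧ (∀ x, -(1 + k * δ) ≤ u x) ∧
      ∃ W ⊆ V, IsOpen W ∧ W.Nonempty ∧ ∀ x ∈ W, k * (1 - δ) ≤ u x := by
  induction k with
  | zero => exact ⟨0, zero_mem 𝒜, by simp, by simp, fun x => by simp, V, subset_rfl, hV, hVne,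
      fun x _ => by simp⟩
  | succ k ih =>
    obtain ⟨u, hu𝒜, hu, huV, hu_lower, W, hWV, hW, hWne, huW⟩ := ih
    obtain ⟨h, hh𝒜, hh, hhW, y, hyW, hy⟩ := h𝒜.exists_peak hW hWne hδ₀ hδ
    have hh_lower : ∀ x, -1 ≤ h x := fun x =>
      (abs_le.1 ((h.abs_apply_le_norm x).trans hh)).1
    have hk : (0 : ℝ) ≤ k * (1 - δ) := mul_nonneg k.cast_nonneg (by linarith)
    refine ⟨u + h, add_mem hu𝒜 hh𝒜, ?_, fun x hx => ?_, fun x => ?_,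
      W ∩ {x | 1 - δ < h x}, Set.inter_subset_left.trans hWV,
      hW.inter (isOpen_lt continuous_const h.continuous), ⟨y, hyW, hy⟩, fun x hx => ?_⟩
    · push_cast
      exact (norm_add_le u h).trans (add_le_add hu hh)
    · have := huV x hx
      have := hhW x fun hxW => hx (hWV hxW)
      push_cast
      rw [ZeroAtInftyContinuousMap.add_apply]
      exact (abs_add_le _ _).trans (by linarith)
    · push_cast
      rw [ZeroAtInftyContinuousMap.add_apply]
      by_cases hxW : x ∈ W
      · linarith [huW x hxW, hh_lower x]
      · linarith [hu_lower x, (abs_le.1 (hhW x hxW)).1]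
    · push_cast
      rw [ZeroAtInftyContinuousMap.add_apply]
      linarith [huW x hx.1, show 1 - δ < h x from hx.2]

theorem exists_almost_nonneg_peak (h𝒜 : SomewhatRegular 𝒜) {V : Set L} (hV : IsOpen V)
    (hVne : V.Nonempty) {δ : ℝ} (hδ₀ : 0 < δ) (hδ : δ < 1) :
    ∃ u ∈ 𝒜, ‖u‖ ≤ 1 ∧ (∀ x ∉ V, |u x| ≤ δ) ∧ (∀ x, -δ ≤ u x) ∧ ∃ y ∈ V, 1 - δ ≤ u y := by
  set k : ℕ := ⌈2 / δ⌉₊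
  have hk : (0 : ℝ) < k := by positivity
  have hkδ : 2 ≤ k * δ := by
    have := Nat.le_ceil (2 / δ)
    rwa [div_le_iff₀ hδ₀] at this
  obtain ⟨u, hu𝒜, hu, huV, hu_lower, W, hWV, -, ⟨y, hyW⟩, huW⟩ :=
    h𝒜.exists_sum_nested_peaks hV hVne (half_pos hδ₀) (by linarith) k
  have happ : ∀ x, ((k : ℝ)⁻¹ • u) x = u x / k := fun x => by simp [div_eq_inv_mul]
  refine ⟨(k : ℝ)⁻¹ • u, Submodule.smul_mem 𝒜 _ hu𝒜, ?_, fun x hx => ?_, fun x => ?_,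
    y, hWV hyW, ?_⟩
  · rw [norm_smul, Real.norm_eq_abs, abs_inv, abs_of_pos hk, inv_mul_le_iff₀ hk, mul_one]
    exact hu
  · rw [happ, abs_div, abs_of_pos hk, div_le_iff₀ hk]
    linarith [huV x hx]
  · rw [happ, le_div_iff₀ hk]
    linarith [hu_lower x]
  · rw [happ, le_div_iff₀ hk]
    nlinarith [huW y hyW]

theorem exists_almost_daugavet [T2Space L] (hL : ∀ x : L, ¬ IsOpen ({x} : Set L))
    (h𝒜 : SomewhatRegular 𝒜) {g f : C₀(L, ℝ)} (hg : ‖g‖ = 1) (hf𝒜 : f ∈ 𝒜) (hf : ‖f‖ ≤ 1)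
    (μ : C₀(L, ℝ) →L[ℝ] ℝ) (hμ : ‖μ‖ ≤ 1) {δ : ℝ} (hδ₀ : 0 < δ) (hδ : δ < 1) :
    ∃ φ ∈ 𝒜, ‖φ‖ ≤ 1 + 3 * δ ∧ μ f - 4 * δ ≤ μ φ ∧ 2 - 4 * δ ≤ ‖g + φ‖ := by
  obtain ⟨x₀, hx₀⟩ := g.exists_lt_norm_apply (r := 1 - δ) (by linarith) (by linarith)
  obtain ⟨s, hs, hsx₀⟩ : ∃ s : ℝ, |s| = 1 ∧ 1 - δ < s * g x₀ := by
    rcases lt_abs.1 (Real.norm_eq_abs (g x₀) ▸ hx₀) with h | h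
    · exact ⟨1, abs_one, by linarith⟩
    · exact ⟨-1, by simp, by linarith⟩
  set n : ℕ := ⌈δ⁻¹⌉₊
  have hn : (0 : ℝ) < n := by positivity
  have hnδ : (n : ℝ)⁻¹ ≤ δ := inv_le_of_inv_le₀ hδ₀ (Nat.le_ceil _)
  obtain ⟨p, U, hUdisj, hU⟩ := IsOpen.exists_fin_pairwise_disjoint hL
    (isOpen_lt continuous_const (continuous_const.mul g.continuous)) ⟨x₀, hsx₀⟩ n
  set V : Fin n → Set L := fun i => U i ∩ {x | |f x - f (p i)| < δ}
  have hV : ∀ i, IsOpen (V i) := fun i =>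
    (hU i).1.inter (isOpen_lt (f.continuous.sub continuous_const).abs continuous_const)
  have hVne : ∀ i, (V i).Nonempty := fun i => ⟨p i, (hU i).2.1, by simpa using hδ₀⟩
  choose u hu𝒜 hu huV hu_lower y hyV hy using
    fun i => h𝒜.exists_almost_nonneg_peak (hV i) (hVne i) hδ₀ hδ
  have : Nonempty (Fin n) := ⟨⟨0, by exact_mod_cast hn⟩⟩
  obtain ⟨i, hi⟩ := ZeroAtInftyContinuousMap.exists_abs_apply_le_of_pairwise_disjoint μ hμ
    (hUdisj.mono fun i j h => h.mono Set.inter_subset_left Set.inter_subset_left) hu huV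
    hδ₀.le
  rw [Fintype.card_fin] at hi
  set a := f (p i)
  have ha : |a| ≤ 1 := (f.abs_apply_le_norm _).trans hf
  have hsa : |s - a| ≤ 2 := by linarith [abs_sub s a]
  have hfV : ∀ x ∈ V i, |f x - a| ≤ δ := fun x hx => hx.2.le
  refine ⟨f + (s - a) • u i, add_mem hf𝒜 (Submodule.smul_mem 𝒜 _ (hu𝒜 i)),
    ZeroAtInftyContinuousMap.norm_add_sub_smul_le hf (hu i) ha hs hδ₀.le hfV (huV i)
      (hu_lower i), ?_, ?_⟩
  · have : |(s - a) * μ (u i)| ≤ 4 * δ := by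
      rw [abs_mul]
      nlinarith [abs_nonneg (μ (u i)), abs_nonneg (s - a)]
    rw [map_add, map_smul, smul_eq_mul]
    linarith [(abs_le.1 this).1]
  · have hgy : 1 - δ < s * g (y i) := (hU i).2.2 (hyV i).1
    have hφy := one_sub_three_mul_le_mul_add_sub_mul (hfV _ (hyV i)) ha hs (hy i)
    refine le_trans ?_ ((g + (f + (s - a) • u i)).mul_apply_le_norm hs (y i))
    simp only [ZeroAtInftyContinuousMap.add_apply, ZeroAtInftyContinuousMap.coe_smul,
      Pi.smul_apply, smul_eq_mul]
    linarith

end SomewhatRegular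

theorem somewhat_regular_daugavet_criterion_general
    {L : Type*} [TopologicalSpace L] [T2Space L]
    (hL : ∀ x : L, ¬ IsOpen ({x} : Set L))
    (𝒜 : Submodule ℝ C₀(L, ℝ)) (h𝒜 : SomewhatRegular 𝒜)
    (g : C₀(L, ℝ)) (hg : ‖g‖ = 1)
    (μ : C₀(L, ℝ) →L[ℝ] ℝ) (hμ : ‖μ‖ = 1)
    (hμ𝒜 : @Norm.norm (StrongDual ℝ 𝒜)
      (ContinuousLinearMap.hasOpNorm (E := 𝒜) (F := ℝ) (σ₁₂ := RingHom.id ℝ))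
      (μ.comp 𝒜.subtypeL) = 1)
    (α ε : ℝ) (hα : 0 < α) (hε : 0 < ε) :
    ∃ ψ ∈ 𝒜, ‖ψ‖ = 1 ∧ 1 - α < μ ψ ∧ 2 - ε < ‖g + ψ‖ := by
  obtain ⟨δ, hδ₀, hδα, hδε, hδ⟩ : ∃ δ : ℝ, 0 < δ ∧ 9 * δ ≤ α ∧ 9 * δ ≤ ε ∧ 9 * δ ≤ 1 :=
    ⟨min (min α ε) 1 / 9, by positivity,
      by linarith [min_le_left (min α ε) 1, min_le_left α ε],
      by linarith [min_le_left (min α ε) 1, min_le_right α ε],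
      by linarith [min_le_right (min α ε) 1]⟩
  obtain ⟨f, hf, hμf⟩ := ContinuousLinearMap.exists_norm_lt_one_lt_apply (E := 𝒜)
    (μ.comp 𝒜.subtypeL) (r := 1 - δ) (by rw [hμ𝒜]; linarith)
  obtain ⟨φ, hφ𝒜, hφ, hμφ, hgφ⟩ := h𝒜.exists_almost_daugavet hL hg f.2 hf.le μ hμ.le hδ₀
    (by linarith)
  have hφ_lower : 1 - 4 * δ ≤ ‖φ‖ := by linarith [norm_add_le g φ]
  have hφ₀ : ‖φ‖ ≠ 0 := by linarith
  have hdist : ‖‖φ‖⁻¹ • φ - φ‖ ≤ 4 * δ := by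
    rw [norm_inv_norm_smul_sub_self hφ₀, abs_le]
    constructor <;> linarith
  set ψ := ‖φ‖⁻¹ • φ
  have hμψ : μ φ - 4 * δ ≤ μ ψ := by
    have := (abs_le.1 (Real.norm_eq_abs _ ▸ μ.le_opNorm (ψ - φ))).1
    rw [map_sub, hμ, one_mul] at this
    linarith
  have hgψ : ‖g + φ‖ ≤ ‖g + ψ‖ + ‖ψ - φ‖ := by
    have hsplit : g + φ = (g + ψ) - (ψ - φ) := by abel
    rw [hsplit]
    exact norm_sub_le _ _
  refine ⟨ψ, Submodule.smul_mem 𝒜 _ hφ𝒜, norm_smul_inv_norm (norm_ne_zero_iff.1 hφ₀), ?_, ?_⟩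
  · change 1 - δ < μ f at hμf
    linarith
  · linarith

theorem somewhat_regular_daugavet_criterion
    {L : Type*} [TopologicalSpace L] [LocallyCompactSpace L] [T2Space L] [Infinite L]
    (hL : ∀ x : L, ¬ IsOpen ({x} : Set L))
    (𝒜 : Submodule ℝ C₀(L, ℝ)) (h𝒜 : SomewhatRegular 𝒜)
    (g : C₀(L, ℝ)) (hg𝒜 : g ∈ 𝒜) (hg : ‖g‖ = 1)
    (μ : C₀(L, ℝ) →L[ℝ] ℝ) (hμ : ‖μ‖ = 1)
    (hμ𝒜 : @Norm.norm (StrongDual ℝ 𝒜)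
      (ContinuousLinearMap.hasOpNorm (E := 𝒜) (F := ℝ) (σ₁₂ := RingHom.id ℝ))
      (μ.comp 𝒜.subtypeL) = 1)
    (α ε : ℝ) (hα : 0 < α) (hε : 0 < ε) :
    ∃ ψ ∈ 𝒜, ‖ψ‖ = 1 ∧ 1 - α < μ ψ ∧ 2 - ε < ‖g + ψ‖ :=
  somewhat_regular_daugavet_criterion_general hL 𝒜 h𝒜 g hg μ hμ hμ𝒜 α ε hα hε
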